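/- Let (X,d) be a metric space equipped with its Borel σ-algebra, and let r_1,…,r_M ∈ X be prototypes with dissimilarity embedding ζ(g) = (d(g,r_1),…,d(g,r_M)) ∈ ℝ^M. Let g_1,…,g_n (with n ≥ 2) be i.i.d. X-valued random elements on a probability space (Ω,P) with common law Q such that E[d(g_1,z)²] < ∞ for every z ∈ X. Let m ∈ X be a Fréchet population mean of Q with Fréchet variation V_Q := E[d(g_1,m)²], let μ̂ : Ω → X be a measurable Fréchet sample mean of g_1,…,g_n, and set ȳ := (1/n)·Σ_{t=1}^n ζ(g_t), Var_F := E[‖ζ(g_1) − E[ζ(g_1)]‖₂²], and v₂ := M·V_Q − Var_F/2. Then for every δ > 0: P(‖ȳ − ζ(μ̂)‖₂² ≥ δ) ≤ v₂/δ. -/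

import Mathlib

/-!
Since `ζ` is `√M`-Lipschitz and `μ̂` minimises `∑ₜ d(gₜ, ·)²`, we get
`∑ₜ ‖ζ(gₜ) - ζ(μ̂)‖² ≤ M ∑ₜ d(gₜ, m)²`. The parallel-axis identity
`∑ₜ ‖ζ(gₜ) - b‖² = ∑ₜ ‖ζ(gₜ) - ȳ‖² + n ‖ȳ - b‖²`, used at `b = ζ(μ̂)` and at `b = e`, turns this
into the pointwise bound `‖ȳ - ζ(μ̂)‖² ≤ (M ∑ₜ d(gₜ, m)² - ∑ₜ ‖ζ(gₜ) - e‖²) / n + ‖ȳ - e‖²`.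
By independence `E ‖ȳ - e‖² = Var_F / n`, so the right-hand side has expectation
`M V_Q - (1 - 1/n) Var_F ≤ v₂`, and Markov's inequality for it gives the claim.
-/

open MeasureTheory ProbabilityTheory Finset

/-- The dissimilarity embedding `ζ(g) = (d(g,r_1),…,d(g,r_M)) ∈ ℝ^M`. -/
noncomputable def dissEmbed {X : Type*} [MetricSpace X] {M : ℕ} (r : Fin M → X) (g : X) :
    EuclideanSpace ℝ (Fin M) :=
  (WithLp.equiv 2 (Fin M → ℝ)).symm fun i => dist g (r i)

theorem measureReal_le_integral_div_of_le {α : Type*} [MeasurableSpace α] {μ : Measure α}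
    [IsFiniteMeasure μ] {f h : α → ℝ} (hf : 0 ≤ f) (hfh : f ≤ h) (hh : Integrable h μ)
    {δ : ℝ} (hδ : 0 < δ) : μ.real {x | δ ≤ f x} ≤ (∫ x, h x ∂μ) / δ := by
  rw [le_div_iff₀' hδ]
  have hsub : {x | δ ≤ f x} ⊆ {x | δ ≤ h x} := fun x hx => le_trans hx (hfh x)
  calc δ * μ.real {x | δ ≤ f x} ≤ δ * μ.real {x | δ ≤ h x} := by gcongr; finiteness
    _ ≤ ∫ x, h x ∂μ :=
      mul_meas_ge_le_integral_of_nonneg (ae_of_all _ fun x => (hf x).trans (hfh x)) hh δ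

theorem sum_norm_sub_sq_eq_sum_norm_sub_mean_sq_add {ι E : Type*} [Fintype ι]
    [NormedAddCommGroup E] [InnerProductSpace ℝ E] (a : ι → E) (b : E) {c : E}
    (hc : (Fintype.card ι : ℝ) • c = ∑ t, a t) :
    ∑ t, ‖a t - b‖ ^ 2 = ∑ t, ‖a t - c‖ ^ 2 + Fintype.card ι * ‖c - b‖ ^ 2 := by
  have hcross : ∑ t, inner ℝ (a t - c) (c - b) = 0 := by
    rw [← sum_inner, sum_sub_distrib, ← hc, sum_const, card_univ, ← Nat.cast_smul_eq_nsmul ℝ,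
      sub_self, inner_zero_left]
  have hsplit (t : ι) :
      ‖a t - b‖ ^ 2 = ‖a t - c‖ ^ 2 + 2 * inner ℝ (a t - c) (c - b) + ‖c - b‖ ^ 2 := by
    rw [← norm_add_sq_real, sub_add_sub_cancel]
  simp only [hsplit, sum_add_distrib, ← mul_sum, hcross, sum_const, card_univ, nsmul_eq_mul]
  ring

section Sampling

variable {Ω X : Type*} [MeasurableSpace Ω] [MeasurableSpace X] {P : Measure Ω} {Q : Measure X}
  {n : ℕ} {g : Fin n → Ω → X}

theorem integrable_sum_comp (hg : ∀ t, MeasurePreserving (g t) P Q) {f : X → ℝ}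
    (hf : Integrable f Q) : Integrable (fun ω => ∑ t, f (g t ω)) P :=
  integrable_finsetSum _ fun t _ => (hg t).integrable_comp_of_integrable hf

theorem integral_sum_comp (hg : ∀ t, MeasurePreserving (g t) P Q) {f : X → ℝ}
    (hf : Integrable f Q) : ∫ ω, ∑ t, f (g t ω) ∂P = n * ∫ x, f x ∂Q := by
  rw [integral_finsetSum (f := fun t ω => f (g t ω)) _
    fun t _ => (hg t).integrable_comp_of_integrable hf]
  have (t : Fin n) : ∫ ω, f (g t ω) ∂P = ∫ x, f x ∂Q := by
    rw [← (hg t).map_eq,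
      integral_map (hg t).aemeasurable ((hg t).map_eq ▸ hf.aestronglyMeasurable)]
  simp [this]

theorem memLp_smul_sum_comp {E : Type*} [NormedAddCommGroup E] [NormedSpace ℝ E]
    (hg : ∀ t, MeasurePreserving (g t) P Q) {φ : X → E} (hφ : MemLp φ 2 Q) (c : ℝ) :
    MemLp (fun ω => c • ∑ t, φ (g t ω)) 2 P :=
  (memLp_finsetSum (f := fun t ω => φ (g t ω)) univ
    fun t _ => hφ.comp_measurePreserving (hg t)).const_smul c

theorem variance_inv_mul_sum_comp (hg : ∀ t, MeasurePreserving (g t) P Q)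
    (hindep : iIndepFun g P) {f : X → ℝ} (hfm : Measurable f) (hf : MemLp f 2 Q) :
    Var[fun ω => (n : ℝ)⁻¹ * ∑ t, f (g t ω); P] = Var[f; Q] / n := by
  have hsum : (fun ω => ∑ t, f (g t ω)) = ∑ t, fun ω => f (g t ω) := by ext; simp
  rw [variance_const_mul, hsum, IndepFun.variance_sum (X := fun t ω => f (g t ω))
    (fun t _ => hf.comp_measurePreserving (hg t))
    (fun s _ t _ hst => (hindep.indepFun hst).comp hfm hfm)]
  simp only [(hg _).variance_fun_comp hfm.aemeasurable, sum_const, card_univ, Fintype.card_fin,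
    nsmul_eq_mul]
  field_simp

theorem integral_norm_inv_smul_sum_comp_sub_integral_sq {ι : Type*} [Fintype ι]
    [IsFiniteMeasure P] [IsFiniteMeasure Q] (hg : ∀ t, MeasurePreserving (g t) P Q)
    (hindep : iIndepFun g P) (hn : n ≠ 0) {φ : X → EuclideanSpace ℝ ι} (hφm : Measurable φ)
    (hφ : MemLp φ 2 Q) :
    ∫ ω, ‖(n : ℝ)⁻¹ • ∑ t, φ (g t ω) - ∫ x, φ x ∂Q‖ ^ 2 ∂P
      = (∫ x, ‖φ x - ∫ y, φ y ∂Q‖ ^ 2 ∂Q) / n := by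
  set e := ∫ x, φ x ∂Q
  have hcoord (i : ι) : MemLp (fun x => φ x i) 2 Q :=
    (EuclideanSpace.proj (𝕜 := ℝ) i).comp_memLp' hφ
  have he (i : ι) : e i = ∫ x, φ x i ∂Q :=
    ((EuclideanSpace.proj (𝕜 := ℝ) i).integral_comp_comm (hφ.integrable one_le_two)).symm
  have hmean (i : ι) : ∫ ω, (n : ℝ)⁻¹ * ∑ t, φ (g t ω) i ∂P = e i := by
    rw [integral_const_mul, integral_sum_comp hg ((hcoord i).integrable one_le_two), he,
      inv_mul_cancel_left₀ (Nat.cast_ne_zero.mpr hn)]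
  have hcoordP (i : ι) : MemLp (fun ω => (n : ℝ)⁻¹ * ∑ t, φ (g t ω) i) 2 P := by
    convert (EuclideanSpace.proj (𝕜 := ℝ) i).comp_memLp'
      (memLp_smul_sum_comp hg hφ (n : ℝ)⁻¹) using 1
    ext ω
    simp [WithLp.ofLp_sum]
  have hvar (i : ι) : ∫ ω, ((n : ℝ)⁻¹ * ∑ t, φ (g t ω) i - e i) ^ 2 ∂P
      = (∫ x, (φ x i - e i) ^ 2 ∂Q) / n := by
    calc _ = Var[fun ω => (n : ℝ)⁻¹ * ∑ t, φ (g t ω) i; P] := by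
          rw [variance_eq_integral (hcoordP i).aemeasurable, hmean]
      _ = _ := by
          rw [variance_inv_mul_sum_comp hg hindep (by fun_prop) (hcoord i),
            variance_eq_integral (hcoord i).aemeasurable, he]
  simp only [EuclideanSpace.real_norm_sq_eq, PiLp.sub_apply, PiLp.smul_apply, WithLp.ofLp_sum,
    Finset.sum_apply, smul_eq_mul]
  rw [integral_finsetSum (f := fun i ω => ((n : ℝ)⁻¹ * ∑ t, φ (g t ω) i - e i) ^ 2) _
      fun i _ => ((hcoordP i).sub (memLp_const (e i))).integrable_sq,
    integral_finsetSum (f := fun i x => (φ x i - e i) ^ 2) _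
      fun i _ => ((hcoord i).sub (memLp_const (e i))).integrable_sq, sum_div]
  simp only [hvar]

end Sampling

noncomputable def embeddedMeanBound {X E : Type*} [PseudoMetricSpace X] [NormedAddCommGroup E]
    [NormedSpace ℝ E] (φ : X → E) (K : ℝ) (m : X) (e : E) {n : ℕ} (x : Fin n → X) : ℝ :=
  (K * ∑ t, dist (x t) m ^ 2 - ∑ t, ‖φ (x t) - e‖ ^ 2) / n + ‖(n : ℝ)⁻¹ • ∑ t, φ (x t) - e‖ ^ 2

theorem norm_inv_smul_sum_sub_sq_le {X E : Type*} [PseudoMetricSpace X] [NormedAddCommGroup E]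
    [InnerProductSpace ℝ E] {φ : X → E} {K : ℝ} (hφ : ∀ x z, ‖φ x - φ z‖ ^ 2 ≤ K * dist x z ^ 2)
    (hK : 0 ≤ K) {n : ℕ} (hn : n ≠ 0) (x : Fin n → X) {μ m : X}
    (hμ : ∑ t, dist (x t) μ ^ 2 ≤ ∑ t, dist (x t) m ^ 2) (e : E) :
    ‖(n : ℝ)⁻¹ • ∑ t, φ (x t) - φ μ‖ ^ 2 ≤ embeddedMeanBound φ K m e x := by
  set y := (n : ℝ)⁻¹ • ∑ t, φ (x t)
  have hy : (Fintype.card (Fin n) : ℝ) • y = ∑ t, φ (x t) := by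
    rw [Fintype.card_fin, smul_inv_smul₀ (Nat.cast_ne_zero.mpr hn)]
  have hμ' := sum_norm_sub_sq_eq_sum_norm_sub_mean_sq_add (fun t => φ (x t)) (φ μ) hy
  have he := sum_norm_sub_sq_eq_sum_norm_sub_mean_sq_add (fun t => φ (x t)) e hy
  have hlip : ∑ t, ‖φ (x t) - φ μ‖ ^ 2 ≤ K * ∑ t, dist (x t) m ^ 2 :=
    calc ∑ t, ‖φ (x t) - φ μ‖ ^ 2 ≤ ∑ t, K * dist (x t) μ ^ 2 :=
          sum_le_sum fun t _ => hφ _ _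
      _ ≤ K * ∑ t, dist (x t) m ^ 2 := by
          rw [← mul_sum]
          exact mul_le_mul_of_nonneg_left hμ hK
  rw [Fintype.card_fin] at hμ' he
  have hnpos : (0 : ℝ) < n := by positivity
  rw [embeddedMeanBound, div_add' _ _ _ hnpos.ne', le_div_iff₀ hnpos]
  nlinarith

section embeddedMeanBound

variable {Ω X ι : Type*} [MeasurableSpace Ω] [MetricSpace X] [MeasurableSpace X] [Fintype ι]
  {P : Measure Ω} {Q : Measure X} [IsFiniteMeasure P] [IsFiniteMeasure Q] {n : ℕ}
  {g : Fin n → Ω → X} {φ : X → EuclideanSpace ℝ ι} {m : X}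

theorem integrable_embeddedMeanBound (hg : ∀ t, MeasurePreserving (g t) P Q)
    (hφ : MemLp φ 2 Q) (hm : Integrable (fun x => dist x m ^ 2) Q) (K : ℝ)
    (e : EuclideanSpace ℝ ι) : Integrable (fun ω => embeddedMeanBound φ K m e (g · ω)) P :=
  have hφe := (hφ.sub (memLp_const e)).integrable_norm_pow two_ne_zero
  ((((integrable_sum_comp hg hm).const_mul K).sub (integrable_sum_comp hg hφe)).div_const _).add
    (((memLp_smul_sum_comp hg hφ _).sub (memLp_const e)).integrable_norm_pow two_ne_zero)

theorem integral_embeddedMeanBound (hg : ∀ t, MeasurePreserving (g t) P Q)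
    (hindep : iIndepFun g P) (hn : n ≠ 0) (hφm : Measurable φ) (hφ : MemLp φ 2 Q)
    (hm : Integrable (fun x => dist x m ^ 2) Q) (K : ℝ) :
    ∫ ω, embeddedMeanBound φ K m (∫ x, φ x ∂Q) (g · ω) ∂P
      = K * ∫ x, dist x m ^ 2 ∂Q - (1 - (n : ℝ)⁻¹) * ∫ x, ‖φ x - ∫ y, φ y ∂Q‖ ^ 2 ∂Q := by
  set e := ∫ x, φ x ∂Q
  have hφe : Integrable (fun x => ‖φ x - e‖ ^ 2) Q :=
    (hφ.sub (memLp_const e)).integrable_norm_pow two_ne_zero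
  have hD := (integrable_sum_comp hg hm).const_mul K
  have hS := integrable_sum_comp hg hφe
  have hA : Integrable
      (fun ω => (K * ∑ t, dist (g t ω) m ^ 2 - ∑ t, ‖φ (g t ω) - e‖ ^ 2) / n) P :=
    (hD.sub hS).div_const _
  have hB : Integrable (fun ω => ‖(n : ℝ)⁻¹ • ∑ t, φ (g t ω) - e‖ ^ 2) P :=
    ((memLp_smul_sum_comp hg hφ _).sub (memLp_const e)).integrable_norm_pow two_ne_zero
  simp only [embeddedMeanBound]
  rw [integral_add hA hB, integral_div, integral_sub hD hS,
    integral_const_mul, integral_sum_comp hg hm, integral_sum_comp hg hφe,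
    integral_norm_inv_smul_sum_comp_sub_integral_sq hg hindep hn hφm hφ]
  field_simp
  ring

end embeddedMeanBound

section dissEmbed

variable {X : Type*} [MetricSpace X] {M : ℕ} (r : Fin M → X)

@[simp]
theorem dissEmbed_apply (x : X) (i : Fin M) : dissEmbed r x i = dist x (r i) := rfl

theorem norm_dissEmbed_sub_sq_le (x z : X) :
    ‖dissEmbed r x - dissEmbed r z‖ ^ 2 ≤ M * dist x z ^ 2 := by
  rw [EuclideanSpace.real_norm_sq_eq]
  calc ∑ i, (dissEmbed r x - dissEmbed r z) i ^ 2 ≤ ∑ _i : Fin M, dist x z ^ 2 :=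
        sum_le_sum fun i _ => by
          simpa [sq_abs] using sq_le_sq.mpr (by simpa using abs_dist_sub_le x z (r i))
    _ = M * dist x z ^ 2 := by simp

theorem continuous_dissEmbed : Continuous (dissEmbed r) :=
  (PiLp.continuous_toLp 2 _).comp (by fun_prop)

theorem memLp_dissEmbed [MeasurableSpace X] [BorelSpace X] {Q : Measure X} [IsFiniteMeasure Q]
    {m : X} (hm : Integrable (fun x => dist x m ^ 2) Q) : MemLp (dissEmbed r) 2 Q := by
  have hdist : MemLp (fun x => dist x m) 2 Q :=
    (memLp_two_iff_integrable_sq (by fun_prop)).mpr hm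
  have hsub : MemLp (fun x => dissEmbed r x - dissEmbed r m) 2 Q := by
    refine hdist.of_le_mul (c := √M)
      ((continuous_dissEmbed r).sub continuous_const).aestronglyMeasurable
      (ae_of_all _ fun x => ?_)
    rw [Real.norm_of_nonneg dist_nonneg, ← Real.sqrt_sq (norm_nonneg _),
      ← Real.sqrt_sq dist_nonneg, ← Real.sqrt_mul (Nat.cast_nonneg M)]
    exact Real.sqrt_le_sqrt (norm_dissEmbed_sub_sq_le r x m)
  convert hsub.add (memLp_const (dissEmbed r m)) using 1
  ext1 x; simp

end dissEmbed

theorem embedded_sample_mean_markov_bound_general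
    {X : Type*} [MetricSpace X] [MeasurableSpace X] [BorelSpace X]
    {Ω : Type*} [MeasurableSpace Ω] (P : Measure Ω) [IsProbabilityMeasure P]
    {M : ℕ} (r : Fin M → X)
    {n : ℕ} (hn : 2 ≤ n) (g : Fin n → Ω → X) (hgm : ∀ t, Measurable (g t))
    (Q : Measure X) [IsProbabilityMeasure Q]
    (hlaw : ∀ t, Measure.map (g t) P = Q)
    (hindep : iIndepFun g P)
    (hint : ∀ z : X, Integrable (fun x => dist x z ^ 2) Q)
    -- Fréchet population mean m with variation V_Q
    (m : X)
    (VQ : ℝ) (hVQ : VQ = ∫ x, dist x m ^ 2 ∂Q)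
    -- measurable Fréchet sample mean
    (μhat : Ω → X)
    (hsample : ∀ ω, ∀ z : X,
      ∑ t, dist (g t ω) (μhat ω) ^ 2 ≤ ∑ t, dist (g t ω) z ^ 2)
    -- embedded sample mean, expectation, variance and v₂
    (ybar : Ω → EuclideanSpace ℝ (Fin M))
    (hybar : ∀ ω, ybar ω = (n : ℝ)⁻¹ • ∑ t, dissEmbed r (g t ω))
    (e : EuclideanSpace ℝ (Fin M)) (he : e = ∫ x, dissEmbed r x ∂Q)
    (VarF : ℝ) (hVarF : VarF = ∫ x, ‖dissEmbed r x - e‖ ^ 2 ∂Q)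
    (v2 : ℝ) (hv2 : v2 = (M : ℝ) * VQ - VarF / 2) :
    ∀ δ > (0 : ℝ),
      (P {ω | δ ≤ ‖ybar ω - dissEmbed r (μhat ω)‖ ^ 2}).toReal ≤ v2 / δ := by
  intro δ hδ
  obtain rfl : ybar = _ := funext hybar
  subst he
  have hn0 : n ≠ 0 := by omega
  have hg (t : Fin n) : MeasurePreserving (g t) P Q := ⟨hgm t, hlaw t⟩
  have hζ : MemLp (dissEmbed r) 2 Q := memLp_dissEmbed r (hint m)
  have hVarF_nonneg : 0 ≤ VarF := hVarF ▸ integral_nonneg fun x => sq_nonneg _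
  calc _ ≤ (∫ ω, embeddedMeanBound (dissEmbed r) M m (∫ x, dissEmbed r x ∂Q) (g · ω) ∂P) / δ :=
        measureReal_le_integral_div_of_le (fun ω => sq_nonneg _)
          (fun ω => norm_inv_smul_sum_sub_sq_le (norm_dissEmbed_sub_sq_le r) (Nat.cast_nonneg M)
            hn0 (g · ω) (hsample ω m) _)
          (integrable_embeddedMeanBound hg hζ (hint m) _ _) hδ
    _ = (M * VQ - (1 - (n : ℝ)⁻¹) * VarF) / δ := by
        rw [integral_embeddedMeanBound hg hindep hn0 (continuous_dissEmbed r).measurable hζ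
          (hint m), hVQ, hVarF]
    _ ≤ v2 / δ := by
        have hn_inv : (n : ℝ)⁻¹ ≤ 2⁻¹ := inv_anti₀ two_pos (by exact_mod_cast hn)
        rw [hv2]
        gcongr
        nlinarith

/-- Markov-inequality part of the paper's Lemma 1:
`P(‖ȳ − ζ(μ̂)‖₂² ≥ δ) ≤ v₂/δ` for every `δ > 0`. -/
theorem embedded_sample_mean_markov_bound
    {X : Type*} [MetricSpace X] [MeasurableSpace X] [BorelSpace X]
    {Ω : Type*} [MeasurableSpace Ω] (P : Measure Ω) [IsProbabilityMeasure P]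
    {M : ℕ} (r : Fin M → X)
    {n : ℕ} (hn : 2 ≤ n) (g : Fin n → Ω → X) (hgm : ∀ t, Measurable (g t))
    (Q : Measure X) [IsProbabilityMeasure Q]
    (hlaw : ∀ t, Measure.map (g t) P = Q)
    (hindep : iIndepFun g P)
    (hint : ∀ z : X, Integrable (fun x => dist x z ^ 2) Q)
    -- Fréchet population mean m with variation V_Q
    (m : X) (hmean : ∀ z : X, ∫ x, dist x m ^ 2 ∂Q ≤ ∫ x, dist x z ^ 2 ∂Q)
    (VQ : ℝ) (hVQ : VQ = ∫ x, dist x m ^ 2 ∂Q)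
    -- measurable Fréchet sample mean
    (μhat : Ω → X) (hμhat : Measurable μhat)
    (hsample : ∀ ω, ∀ z : X,
      ∑ t, dist (g t ω) (μhat ω) ^ 2 ≤ ∑ t, dist (g t ω) z ^ 2)
    -- embedded sample mean, expectation, variance and v₂
    (ybar : Ω → EuclideanSpace ℝ (Fin M))
    (hybar : ∀ ω, ybar ω = (n : ℝ)⁻¹ • ∑ t, dissEmbed r (g t ω))
    (e : EuclideanSpace ℝ (Fin M)) (he : e = ∫ x, dissEmbed r x ∂Q)
    (VarF : ℝ) (hVarF : VarF = ∫ x, ‖dissEmbed r x - e‖ ^ 2 ∂Q)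
    (v2 : ℝ) (hv2 : v2 = (M : ℝ) * VQ - VarF / 2) :
    ∀ δ > (0 : ℝ),
      (P {ω | δ ≤ ‖ybar ω - dissEmbed r (μhat ω)‖ ^ 2}).toReal ≤ v2 / δ :=
  embedded_sample_mean_markov_bound_general P r hn g hgm Q hlaw hindep hint m VQ hVQ μhat hsample
    ybar hybar e he VarF hVarF v2 hv2
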